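/- Let A be an alphabet with exactly 2 letters. Then for every word u over A, h(u) = ρ(u) + 1. -/

import Mathlib

/-- Simon's congruence of order `k`: `u` and `v` have the same subwords
(subsequences) of length at most `k`. -/
def SimonCong {A : Type*} (k : ℕ) (u v : List A) : Prop :=
  ∀ s : List A, s.length ≤ k → (s.Sublist u ↔ s.Sublist v)

/-- The subword distance `δ(u,v) = sup {k | u ∼ₖ v} ∈ ℕ ∪ {∞}`. -/
noncomputable def delta {A : Type*} (u v : List A) : ℕ∞ :=
  ⨆ k ∈ {k : ℕ | SimonCong k u v}, (k : ℕ∞)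

/-- Right side distance `r(u,t) = δ(u, u·t)`. -/
noncomputable def sideR {A : Type*} (u t : List A) : ℕ∞ :=
  delta u (u ++ t)

/-- Left side distance `ℓ(t,u) = δ(t·u, u)`. -/
noncomputable def sideL {A : Type*} (t u : List A) : ℕ∞ :=
  delta (t ++ u) u

/-- The piecewise complexity `h(u)`: the least `n` such that every word
`v` with `u ∼ₙ v` equals `u`. -/
noncomputable def pieceH {A : Type*} (u : List A) : ℕ :=
  sInf {n : ℕ | ∀ v : List A, SimonCong n u v → v = u}

/-- A word `u` is `m`-reduced if no strict subword of `u` is `∼ₘ`-equivalent to `u`. -/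
def MReduced {A : Type*} (m : ℕ) (u : List A) : Prop :=
  ∀ u' : List A, u'.Sublist u → u' ≠ u → ¬ SimonCong m u' u

/-- The piecewise minimality index `ρ(u)`: the least `m` such that `u` is `m`-reduced. -/
noncomputable def rho {A : Type*} (u : List A) : ℕ :=
  sInf {m : ℕ | MReduced m u}


/-!
Inserting a letter `d` between `x` and `y` preserves `∼ₙ` exactly when `x ∼ₖ x d` and
`y ∼ₗ d y` for some `k + l = n`. So if deleting the letter `e` from `u = x e y` preserves `∼ₘ`,
doubling it gives a word `x e e y ≠ u` with `x e e y ∼ₘ₊₁ u`; hence `h(u) > ρ(u)`.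

Over two letters an insertion preserving `∼ₙ₊₁` can conversely be traded for a deletion
preserving `∼ₙ`, since two of the three letters at the insertion point (the one before it, the
inserted one, the one after it) coincide. A word `w ≠ u` with `u ∼ₙ₊₁ w` is reduced to an
insertion into `u` along the common prefix `p` of `u = p a u'` and `w = p b w'`: if `p` does not
end with `a` then `u ∼ₙ₊₁ p b a u'`, and otherwise `w ∼ₙ₊₁ p a b w'`, which shares a longer
prefix with `u`. Thus `u` is not `n`-reduced, which gives `h(u) ≤ ρ(u) + 1`.
-/

section

open List

variable {A : Type*}

theorem sublist_append_singleton_iff {s x : List A} {d : A} :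
    s <+ x ++ [d] ↔ s <+ x ∨ ∃ r, s = r ++ [d] ∧ r <+ x := by
  rw [sublist_append_iff]
  constructor
  · rintro ⟨s₁, s₂, rfl, h₁, h₂⟩
    rcases sublist_singleton.mp h₂ with rfl | rfl
    · exact Or.inl (by simpa using h₁)
    · exact Or.inr ⟨s₁, rfl, h₁⟩
  · rintro (h | ⟨r, rfl, hr⟩)
    · exact ⟨s, [], by simp, h, nil_sublist _⟩
    · exact ⟨r, [d], rfl, hr, Sublist.refl _⟩

theorem sublist_of_append_singleton_sublist_append_singleton {s x : List A} {a b : A}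
    (h : s ++ [a] <+ x ++ [b]) : s <+ x := by
  simpa using (reverse_sublist.mpr h).tail

theorem cons_sublist_of_append_cons_sublist_append {s t x y : List A} {d : A}
    (h : s ++ d :: t <+ x ++ y) (hs : ¬ s ++ [d] <+ x) : d :: t <+ y := by
  obtain ⟨α, β, hαβ, hα, hβ⟩ := sublist_append_iff.mp h
  rcases append_eq_append_iff.mp hαβ with ⟨γ, rfl, hγ⟩ | ⟨γ, rfl, rfl⟩
  · rcases γ with _ | ⟨c, γ⟩
    · simpa [hγ] using hβ
    · obtain ⟨rfl, -⟩ := cons.inj hγ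
      exact absurd ((sublist_append_left _ γ).trans (by simpa using hα)) hs
  · exact (sublist_append_right γ _).trans hβ

theorem exists_eq_append_cons_sublist_of_sublist {u' u : List A} (h : u' <+ u) (hne : u' ≠ u) :
    ∃ x e y, u = x ++ e :: y ∧ u' <+ x ++ y := by
  induction h with
  | slnil => exact absurd rfl hne
  | @cons l₁ l₂ a h _ => exact ⟨[], a, l₂, rfl, h⟩
  | @cons_cons l₁ l₂ a _ ih =>
    obtain ⟨x, e, y, rfl, hxy⟩ := ih fun h => hne (h ▸ rfl)
    exact ⟨a :: x, e, y, rfl, hxy.cons_cons a⟩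

namespace SimonCong

variable {n m : ℕ} {u v w : List A}

theorem zero (u v : List A) : SimonCong 0 u v := fun s hs => by
  rw [eq_nil_of_length_eq_zero (Nat.le_zero.mp hs)]
  simp

theorem mono (hmn : m ≤ n) (h : SimonCong n u v) : SimonCong m u v :=
  fun s hs => h s (hs.trans hmn)

theorem symm (h : SimonCong n u v) : SimonCong n v u := fun s hs => (h s hs).symm

theorem trans (h : SimonCong n u v) (h' : SimonCong n v w) : SimonCong n u w :=
  fun s hs => (h s hs).trans (h' s hs)

theorem iff_of_sublist (huv : u <+ v) :
    SimonCong n u v ↔ ∀ s : List A, s.length ≤ n → s <+ v → s <+ u :=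
  ⟨fun h s hs => (h s hs).mpr, fun h s hs => ⟨fun hsu => hsu.trans huv, h s hs⟩⟩

theorem of_sublist_of_sublist (huv : u <+ v) (hvw : v <+ w) (h : SimonCong n u w) :
    SimonCong n u v ∧ SimonCong n v w :=
  ⟨(iff_of_sublist huv).mpr fun s hs hsv => (h s hs).mpr (hsv.trans hvw),
    (iff_of_sublist hvw).mpr fun s hs hsw => ((h s hs).mpr hsw).trans huv⟩

end SimonCong

section Insertion

variable {n k l : ℕ} {x y : List A} {c d e : A}

theorem simonCong_append_singleton_iff :
    SimonCong k x (x ++ [d]) ↔ ∀ s, s <+ x → s.length < k → s ++ [d] <+ x := by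
  rw [SimonCong.iff_of_sublist (sublist_append_left x [d])]
  constructor
  · intro h s hs hlt
    exact h _ (by simpa using hlt) (hs.append (Sublist.refl _))
  · intro h s hs hsub
    rcases sublist_append_singleton_iff.mp hsub with hsub | ⟨r, rfl, hr⟩
    · exact hsub
    · exact h r hr (by simp at hs; omega)

theorem simonCong_cons_iff :
    SimonCong l y (d :: y) ↔ ∀ t, t <+ y → t.length < l → d :: t <+ y := by
  rw [SimonCong.iff_of_sublist (sublist_cons_self d y)]
  constructor
  · intro h t ht hlt
    exact h _ (by simpa using hlt) (ht.cons_cons d)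
  · intro h t ht hsub
    rcases sublist_cons_iff.mp hsub with hsub | ⟨r, rfl, hr⟩
    · exact hsub
    · exact h r hr (by simp at ht; omega)

theorem not_simonCong_succ_nil_singleton : ¬ SimonCong (k + 1) [] [d] :=
  fun h => absurd ((h [d] (by simp)).mpr (Sublist.refl _)) (by simp)

theorem simonCong_of_simonCong_succ_snoc (h : SimonCong (k + 1) (x ++ [e]) (x ++ [e] ++ [d])) :
    SimonCong k x (x ++ [e]) := by
  rw [simonCong_append_singleton_iff] at h ⊢
  intro s hs hlt
  exact sublist_of_append_singleton_sublist_append_singleton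
    (h (s ++ [e]) (hs.append (Sublist.refl _)) (by simpa using hlt))

theorem simonCong_succ_snoc_snoc (h : SimonCong k x (x ++ [d])) :
    SimonCong (k + 1) (x ++ [d]) (x ++ [d] ++ [d]) := by
  rw [simonCong_append_singleton_iff] at h ⊢
  intro s hs hlt
  rcases sublist_append_singleton_iff.mp hs with hs | ⟨r, rfl, hr⟩
  · exact hs.append (Sublist.refl _)
  · exact (h r hr (by simp at hlt; omega)).append (Sublist.refl _)

theorem simonCong_of_simonCong_succ_cons (h : SimonCong (l + 1) (c :: y) (d :: c :: y)) :
    SimonCong l y (c :: y) := by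
  rw [simonCong_cons_iff] at h ⊢
  intro t ht hlt
  exact (h (c :: t) (ht.cons_cons c) (by simpa using hlt)).tail

theorem simonCong_append_cons_iff :
    SimonCong n (x ++ y) (x ++ d :: y) ↔
      ∃ k l, k + l = n ∧ SimonCong k x (x ++ [d]) ∧ SimonCong l y (d :: y) := by
  constructor
  · intro h
    classical
    let P j := SimonCong j x (x ++ [d])
    set k := Nat.findGreatest P n
    have hkn : k ≤ n := Nat.findGreatest_le n
    refine ⟨k, n - k, by omega, Nat.findGreatest_spec (P := P) (Nat.zero_le n) (.zero _ _), ?_⟩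
    rw [simonCong_cons_iff]
    intro t ht hlt
    have hmax : ¬ SimonCong (k + 1) x (x ++ [d]) :=
      Nat.findGreatest_is_greatest (P := P) (n := n) (by omega) (by omega)
    simp only [simonCong_append_singleton_iff, not_forall] at hmax
    obtain ⟨s, hs, hslt, hsd⟩ := hmax
    refine cons_sublist_of_append_cons_sublist_append
      ((h _ ?_).mpr (hs.append (ht.cons_cons d))) hsd
    simp only [length_append, length_cons]
    omega
  · rintro ⟨k, l, rfl, hx, hy⟩
    rw [SimonCong.iff_of_sublist ((Sublist.refl x).append (sublist_cons_self d y))]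
    rw [simonCong_append_singleton_iff] at hx
    rw [simonCong_cons_iff] at hy
    intro s hs hsub
    obtain ⟨s₁, s₂, rfl, h₁, h₂⟩ := sublist_append_iff.mp hsub
    rcases sublist_cons_iff.mp h₂ with h₂ | ⟨s₃, rfl, h₃⟩
    · exact h₁.append h₂
    · by_cases hk : s₁.length < k
      · simpa using (hx s₁ h₁ hk).append h₃
      · exact h₁.append (hy s₃ h₃ (by simp at hs; omega))

theorem simonCong_succ_append_cons_cons (h : SimonCong n (x ++ y) (x ++ e :: y)) :
    SimonCong (n + 1) (x ++ e :: y) (x ++ e :: e :: y) := by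
  obtain ⟨k, l, rfl, hx, hy⟩ := simonCong_append_cons_iff.mp h
  have := (simonCong_append_cons_iff (n := k + l + 1)).mpr
    ⟨k + 1, l, by omega, simonCong_succ_snoc_snoc hx, hy⟩
  simpa using this

end Insertion

def HasRedundantLetter (n : ℕ) (u : List A) : Prop :=
  ∃ x e y, u = x ++ e :: y ∧ SimonCong n (x ++ y) (x ++ e :: y)

theorem not_mReduced_iff {n : ℕ} {u : List A} : ¬ MReduced n u ↔ HasRedundantLetter n u := by
  simp only [MReduced, not_forall, not_not, exists_prop]
  constructor
  · rintro ⟨u', hsub, hne, h⟩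
    obtain ⟨x, e, y, rfl, hxy⟩ := exists_eq_append_cons_sublist_of_sublist hsub hne
    exact ⟨x, e, y, rfl,
      (h.of_sublist_of_sublist hxy ((Sublist.refl x).append (sublist_cons_self e y))).2⟩
  · rintro ⟨x, e, y, rfl, h⟩
    exact ⟨x ++ y, (Sublist.refl x).append (sublist_cons_self e y),
      fun h' => by simpa using congrArg length h', h⟩

theorem mReduced_rho (u : List A) : MReduced (rho u) u :=
  Nat.sInf_mem (s := {m | MReduced m u}) ⟨u.length, fun _ hsub hne h =>
    hne (hsub.eq_of_length_le ((h u le_rfl).mpr (Sublist.refl u)).length_le)⟩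

theorem exists_ne_simonCong_rho [Nonempty A] (u : List A) : ∃ v ≠ u, SimonCong (rho u) u v := by
  obtain ⟨a⟩ := ‹Nonempty A›
  rcases h : rho u with _ | m
  · exact ⟨a :: u, fun h => by simpa using congrArg length h, SimonCong.zero _ _⟩
  · have : ¬ MReduced m u :=
      Nat.notMem_of_lt_sInf (s := {m | MReduced m u}) (by unfold rho at h; omega)
    obtain ⟨x, e, y, rfl, hxy⟩ := not_mReduced_iff.mp this
    exact ⟨x ++ e :: e :: y, fun h => by simpa using congrArg length h,
      simonCong_succ_append_cons_cons hxy⟩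

theorem simonCong_append_cons_cons_of_simonCong {q u v : List A} {a b : A} {n : ℕ}
    (hq : q = [] ∨ ∃ q₀, q = q₀ ++ [b]) (hab : a ≠ b)
    (H : SimonCong n (q ++ a :: u) (q ++ b :: v)) :
    SimonCong n (q ++ a :: u) (q ++ b :: a :: u) := by
  rw [SimonCong.iff_of_sublist ((Sublist.refl q).append (sublist_cons_self b _))]
  intro s hs hsub
  obtain ⟨s₁, s₂, rfl, h₁, h₂⟩ := sublist_append_iff.mp hsub
  rcases sublist_cons_iff.mp h₂ with h₂ | ⟨s₃, rfl, h₃⟩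
  · exact h₁.append h₂
  by_cases hb : s₁ ++ [b] <+ q
  · simpa using hb.append h₃
  have ha : ¬ s₁ ++ [a] <+ q := by
    rcases hq with rfl | ⟨q₀, rfl⟩
    · simp
    · exact fun hsa => hb
        ((sublist_of_append_singleton_sublist_append_singleton hsa).append (Sublist.refl _))
  have hs₃ : s₃ <+ v := by
    obtain ⟨r, hr, hs₃r, hlen⟩ : ∃ r, r <+ u ∧ s₃ <+ a :: r ∧ r.length ≤ s₃.length := by
      rcases sublist_cons_iff.mp h₃ with h₃ | ⟨r, rfl, hr⟩
      · exact ⟨s₃, h₃, sublist_cons_self a s₃, le_rfl⟩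
      · exact ⟨r, hr, Sublist.refl _, by simp⟩
    have hrv : s₁ ++ a :: r <+ q ++ b :: v :=
      (H _ (by simp at hs ⊢; omega)).mp (h₁.append (hr.cons_cons a))
    exact hs₃r.trans ((cons_sublist_of_append_cons_sublist_append hrv ha).of_cons_of_ne hab)
  exact (H _ hs).mpr (h₁.append (hs₃.cons_cons b))

theorem eq_of_ne_of_ne_of_card_le_two [Fintype A] (hA : Fintype.card A ≤ 2) {a b c : A}
    (ha : a ≠ c) (hb : b ≠ c) : a = b := by
  by_contra hab
  have := Fintype.two_lt_card_iff.mpr ⟨a, b, c, hab, ha, hb⟩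
  omega

theorem hasRedundantLetter_of_simonCong_append_cons [Fintype A] (hA : Fintype.card A ≤ 2)
    {n : ℕ} {x y : List A} {d : A} (h : SimonCong (n + 1) (x ++ y) (x ++ d :: y)) :
    HasRedundantLetter n (x ++ y) := by
  obtain ⟨k, l, hkl, hx, hy⟩ := simonCong_append_cons_iff.mp h
  rcases k with _ | k
  · obtain rfl : l = n + 1 := by omega
    rcases y with _ | ⟨c, y⟩
    · exact absurd hy not_simonCong_succ_nil_singleton
    exact ⟨x, c, y, rfl, simonCong_append_cons_iff.mpr
      ⟨0, n, by omega, SimonCong.zero _ _, simonCong_of_simonCong_succ_cons hy⟩⟩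
  rcases x.eq_nil_or_concat' with rfl | ⟨x, c', rfl⟩
  · exact absurd hx not_simonCong_succ_nil_singleton
  rcases l with _ | l
  · exact ⟨x, c', y, by simp, simonCong_append_cons_iff.mpr
      ⟨k, 0, by omega, simonCong_of_simonCong_succ_snoc hx, SimonCong.zero _ _⟩⟩
  rcases y with _ | ⟨c, y⟩
  · exact absurd hy not_simonCong_succ_nil_singleton
  by_cases hc' : c' = d
  · subst hc'
    exact ⟨x, c', c :: y, by simp, simonCong_append_cons_iff.mpr
      ⟨k, l + 1, by omega, simonCong_of_simonCong_succ_snoc hx, hy⟩⟩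
  have hxc : SimonCong (k + 1) (x ++ [c']) (x ++ [c'] ++ [c]) := by
    by_cases hc : c = d
    · rwa [hc]
    · rw [eq_of_ne_of_ne_of_card_le_two hA hc hc']
      exact simonCong_succ_snoc_snoc (simonCong_of_simonCong_succ_snoc hx)
  exact ⟨x ++ [c'], c, y, rfl, simonCong_append_cons_iff.mpr
    ⟨k + 1, l, by omega, hxc, simonCong_of_simonCong_succ_cons hy⟩⟩

theorem hasRedundantLetter_of_simonCong_append [Fintype A] (hA : Fintype.card A ≤ 2) {n : ℕ} :
    ∀ p u w : List A, SimonCong (n + 1) (p ++ u) (p ++ w) → u ≠ w →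
      HasRedundantLetter n (p ++ u)
  | _, [], [], _, hne => absurd rfl hne
  | p, [], b :: w, H, _ => by
    rw [append_nil] at H ⊢
    have hb := (H.of_sublist_of_sublist (sublist_append_left p [b])
      ((Sublist.refl p).append ((nil_sublist w).cons_cons b))).1
    simpa using hasRedundantLetter_of_simonCong_append_cons hA (y := []) (by simpa using hb)
  | p, a :: u, [], H, _ => by
    rw [append_nil] at H
    exact ⟨p, a, u, rfl, ((H.symm.of_sublist_of_sublist (sublist_append_left p u)
      ((Sublist.refl p).append (sublist_cons_self a u))).2).mono n.le_succ⟩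
  | p, a :: u, b :: w, H, hne => by
    by_cases hab : a = b
    · subst hab
      simpa using hasRedundantLetter_of_simonCong_append hA (p ++ [a]) u w (by simpa using H)
        (fun h => hne (h ▸ rfl))
    by_cases hp : p = [] ∨ ∃ p₀, p = p₀ ++ [b]
    · exact hasRedundantLetter_of_simonCong_append_cons hA
        (simonCong_append_cons_cons_of_simonCong hp hab H)
    by_cases hu : u = b :: w
    · subst hu
      exact ⟨p, a, b :: w, rfl, H.symm.mono n.le_succ⟩
    obtain ⟨p₀, c, rfl⟩ : ∃ p₀ c, p = p₀ ++ [c] := by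
      rcases p.eq_nil_or_concat' with rfl | hp'
      · exact absurd (Or.inl rfl) hp
      · exact hp'
    obtain rfl : c = a :=
      eq_of_ne_of_ne_of_card_le_two hA (fun hcb => hp (Or.inr ⟨p₀, by rw [hcb]⟩)) hab
    have H' := H.trans
      (simonCong_append_cons_cons_of_simonCong (Or.inr ⟨p₀, rfl⟩) (Ne.symm hab) H.symm)
    simpa using hasRedundantLetter_of_simonCong_append hA (p₀ ++ [c] ++ [c]) u (b :: w)
      (by simpa using H') hu
termination_by _ u w => u.length + w.length

theorem eq_of_simonCong_rho_succ [Fintype A] (hA : Fintype.card A ≤ 2) {u v : List A}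
    (h : SimonCong (rho u + 1) u v) : v = u := by
  by_contra hne
  exact not_mReduced_iff.mpr
    (hasRedundantLetter_of_simonCong_append hA [] u v h (Ne.symm hne)) (mReduced_rho u)

end

theorem stmt17 {A : Type*} [Fintype A] (hA : Fintype.card A = 2) (u : List A) :
    pieceH u = rho u + 1 := by
  have : Nonempty A := Fintype.card_pos_iff.mp (by omega)
  rw [pieceH, Nat.sInf_upward_closed_eq_succ_iff (s := {n | ∀ v, SimonCong n u v → v = u})
    fun _ _ hk h v hv => h v (hv.mono hk)]
  refine ⟨fun v => eq_of_simonCong_rho_succ hA.le, fun h => ?_⟩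
  obtain ⟨v, hvu, hv⟩ := exists_ne_simonCong_rho u
  exact hvu (h v hv)
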